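/- arXiv:2409.10800 — 2 statements merged into one kernel-verified Lean document; each statement's English description precedes it below -/
import Mathlib

section
/- Let $l, w, g$ be integers and let $d, r_0, \chi_0$ be positive integers with $\gcd(r_0,\chi_0)=1$. Set $r = d r_0$, $\chi = d\chi_0$, $e = 1 + l r_0^2$, $g^{\mathrm{sp}} = 1 + (g-1)r + \tfrac{rl(r-1)}{2}$, and $m = \gcd(r, \chi, w+1-g^{\mathrm{sp}})$. Then $m$ divides $d$, and a tuple $(d_1,\dots,d_k)$ of positive integers with $d_1+\cdots+d_k = d$ satisfies, for every $1 \le i \le k$, that the rational number $\tfrac{e-1}{2} d_i\big(\sum_{j<i} d_j - \sum_{j>i} d_j\big) + \tfrac{w d_i}{d}$ is an integer, if and only if $\tfrac{d}{m}$ divides $d_i$ for every $1 \le i \le k$. -/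
/-!
Since `gcd r₀ χ₀ = 1`, `m = gcd(d, N)` with `N = w + 1 - gˢᵖ`. Writing `A` and `B` for the sums
of the parts before and after `d_i`, so that `A + d_i + B = d`, the `i`-th quantity equals an
integer plus `N d_i / d`: after clearing denominators the difference is `l r₀ d_i (r₀ d_i - 1)`
plus even terms. Hence it is an integer iff `d ∣ N d_i`, i.e. iff `d / gcd(d, N) ∣ d_i`.
-/

open Finset

theorem Finset.sum_filter_lt_add_add_sum_filter_gt {ι M : Type*} [Fintype ι] [LinearOrder ι]
    [AddCommMonoid M] (f : ι → M) (i : ι) :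
    ∑ j ∈ univ.filter (· < i), f j + f i + ∑ j ∈ univ.filter (i < ·), f j = ∑ j, f j := by
  rw [← sum_filter_add_sum_filter_not univ (· < i), add_assoc,
    ← sum_insert (s := univ.filter (i < ·)) (by simp)]
  congr 2
  ext j
  simp [le_iff_eq_or_lt, eq_comm]

theorem Int.dvd_mul_iff_ediv_gcd_dvd {a b x : ℤ} (ha : a ≠ 0) :
    a ∣ b * x ↔ a / (Int.gcd a b : ℤ) ∣ x := by
  have hpos : 0 < Int.gcd a b := Int.gcd_pos_of_ne_zero_left b ha
  have hga : (Int.gcd a b : ℤ) * (a / Int.gcd a b) = a :=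
    Int.mul_ediv_cancel' (Int.gcd_dvd_left ..)
  have hgb : (Int.gcd a b : ℤ) * (b / Int.gcd a b) = b :=
    Int.mul_ediv_cancel' (Int.gcd_dvd_right ..)
  calc a ∣ b * x
      ↔ (Int.gcd a b : ℤ) * (a / Int.gcd a b) ∣ Int.gcd a b * (b / Int.gcd a b * x) := by
        rw [hga, ← mul_assoc, hgb]
    _ ↔ a / Int.gcd a b ∣ b / Int.gcd a b * x := mul_dvd_mul_iff_left (by exact_mod_cast hpos.ne')
    _ ↔ a / Int.gcd a b ∣ x :=
        ⟨fun h ↦ Int.dvd_of_dvd_mul_right_of_gcd_one h (Int.gcd_div_gcd_div_gcd hpos),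
          fun h ↦ h.mul_left _⟩

theorem Int.exists_intCast_eq_add_div_iff (K a b : ℤ) (hb : b ≠ 0) :
    (∃ n : ℤ, (K : ℚ) + a / b = n) ↔ b ∣ a := by
  have hbq : (b : ℚ) ≠ 0 := Int.cast_ne_zero.mpr hb
  constructor
  · rintro ⟨n, hn⟩
    refine ⟨n - K, ?_⟩
    have : (a : ℚ) = b * (n - K) := by
      field_simp at hn
      linear_combination hn
    exact_mod_cast this
  · rintro ⟨c, rfl⟩
    exact ⟨K + c, by push_cast; field_simp⟩

theorem exists_int_partition_term_eq {l w g d r0 r e gsp a A B : ℤ} (hd : d ≠ 0)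
    (hr : r = d * r0) (he : e = 1 + l * r0 ^ 2)
    (hgsp : 2 * gsp = 2 + 2 * (g - 1) * r + r * l * (r - 1)) (hsum : A + a + B = d) :
    ∃ K : ℤ, ((e : ℚ) - 1) / 2 * a * (A - B) + w * a / d
      = K + (((w + 1 - gsp) * a : ℤ) : ℚ) / d := by
  obtain ⟨c, hc⟩ := Int.even_mul_succ_self (r0 * a - 1)
  have key : (e - 1) * a * (A - B) * d + 2 * w * a
      = 2 * d * ((g - 1) * r0 * a + l * r0 ^ 2 * a * A + l * c) + 2 * ((w + 1 - gsp) * a) := by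
    linear_combination (-(l * r0 ^ 2 * a * d)) * hsum + a * hgsp + (l * d) * hc
      + (a * (A - B) * d) * he + (a * (l * (r - 1) + 2 * (g - 1)) + a * d * r0 * l) * hr
  refine ⟨(g - 1) * r0 * a + l * r0 ^ 2 * a * A + l * c, ?_⟩
  have hdq : (d : ℚ) ≠ 0 := Int.cast_ne_zero.mpr hd
  have keyq := congrArg (fun t : ℤ ↦ (t : ℚ)) key
  push_cast at keyq ⊢
  field_simp
  linear_combination keyq

theorem stmt_0_general (l w g : ℤ) (d r0 χ0 : ℤ) (hd : 0 < d)
    (hcop : Int.gcd r0 χ0 = 1)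
    (r χ e gsp : ℤ) (hr : r = d * r0) (hχ : χ = d * χ0) (he : e = 1 + l * r0 ^ 2)
    (hgsp : 2 * gsp = 2 + 2 * (g - 1) * r + r * l * (r - 1))
    (m : ℕ) (hm : m = Int.gcd r (Int.gcd χ (w + 1 - gsp))) :
    (m : ℤ) ∣ d ∧
      ∀ (k : ℕ) (D : Fin k → ℤ), (∀ i, 0 < D i) → (∑ i, D i) = d →
        ((∀ i : Fin k, ∃ n : ℤ,
            ((e : ℚ) - 1) / 2 * (D i : ℚ) *
                ((∑ j ∈ Finset.univ.filter (fun j => j < i), (D j : ℚ)) -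
                  (∑ j ∈ Finset.univ.filter (fun j => i < j), (D j : ℚ))) +
              (w : ℚ) * (D i : ℚ) / (d : ℚ) = (n : ℚ))
          ↔ ∀ i : Fin k, (d / (m : ℤ)) ∣ D i) := by
  have hgcd : m = Int.gcd d (w + 1 - gsp) := by
    rw [hm, ← Int.gcd_assoc, hr, hχ, Int.gcd_mul_left, hcop, mul_one]
    rfl
  refine ⟨hgcd ▸ Int.gcd_dvd_left .., fun k D _ hsum ↦ forall_congr' fun i ↦ ?_⟩
  obtain ⟨K, hK⟩ := exists_int_partition_term_eq (a := D i) (w := w) hd.ne' hr he hgsp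
    ((sum_filter_lt_add_add_sum_filter_gt D i).trans hsum)
  simp only [Int.cast_sum] at hK
  rw [hK, Int.exists_intCast_eq_add_div_iff K _ d hd.ne', Int.dvd_mul_iff_ediv_gcd_dvd hd.ne',
    hgcd]

/-- The membership condition defining the set `S^d_w` of partitions of `d`
(for the quiver with one vertex and `e = 1 + l r₀²` loops) is equivalent to each part
being divisible by `d/m`, where `m = gcd(r, χ, w + 1 - gˢᵖ)`; moreover `m ∣ d`. -/
theorem stmt_0 (l w g : ℤ) (d r0 χ0 : ℤ) (hd : 0 < d) (hr0 : 0 < r0) (hχ0 : 0 < χ0)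
    (hcop : Int.gcd r0 χ0 = 1)
    (r χ e gsp : ℤ) (hr : r = d * r0) (hχ : χ = d * χ0) (he : e = 1 + l * r0 ^ 2)
    (hgsp : 2 * gsp = 2 + 2 * (g - 1) * r + r * l * (r - 1))
    (m : ℕ) (hm : m = Int.gcd r (Int.gcd χ (w + 1 - gsp))) :
    (m : ℤ) ∣ d ∧
      ∀ (k : ℕ) (D : Fin k → ℤ), (∀ i, 0 < D i) → (∑ i, D i) = d →
        ((∀ i : Fin k, ∃ n : ℤ,
            ((e : ℚ) - 1) / 2 * (D i : ℚ) *
                ((∑ j ∈ Finset.univ.filter (fun j => j < i), (D j : ℚ)) -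
                  (∑ j ∈ Finset.univ.filter (fun j => i < j), (D j : ℚ))) +
              (w : ℚ) * (D i : ℚ) / (d : ℚ) = (n : ℚ))
          ↔ ∀ i : Fin k, (d / (m : ℤ)) ∣ D i) :=
  stmt_0_general l w g d r0 χ0 hd hcop r χ e gsp hr hχ he hgsp m hm
end

section
/- Let $g, w$ be integers and let $r, l$ be positive integers. Set $g^{\mathrm{sp}} = 1 + (g-1)r + \tfrac{rl(r-1)}{2}$. Then $\gcd(r, w+1-g^{\mathrm{sp}}) = 1$ if and only if one of the following holds: (1) $l$ is even and $\gcd(r,w) = 1$; (2) $l$ is odd, $\gcd(r,w) = 1$, and $r \not\equiv 2 \pmod 4$; (3) $l$ is odd, $\gcd(r,w) = 2$, and $r/2$ is odd. -/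
/-!
Modulo `r`, `w + 1 - gˢᵖ ≡ w - l * (r * (r - 1) / 2)`, and the shift `l * (r * (r - 1) / 2)` is
`≡ 0` unless `l` is odd and `r = 2 * s` is even, in which case it is `≡ s`. Everything thus reduces
to `gcd (2 * s) (w - s) = 1`, i.e. `gcd s w = 1` with `w - s` odd: for even `s` this says `w` is odd,
i.e. `gcd (2 * s) w = 1`; for odd `s` it says `w` is even, i.e. `gcd (2 * s) w = 2`.
-/

namespace Int

lemma gcd_two_mul_eq_one_iff (s x : ℤ) : gcd (2 * s) x = 1 ↔ gcd s x = 1 ∧ Odd x := by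
  simp only [← isCoprime_iff_gcd_eq_one, IsCoprime.mul_left_iff, isCoprime_two_left, and_comm]

lemma gcd_two_mul_eq_two_iff {s : ℤ} (hs : Odd s) (x : ℤ) :
    gcd (2 * s) x = 2 ↔ gcd s x = 1 ∧ Even x := by
  by_cases hx : Even x
  · obtain ⟨y, rfl⟩ := hx
    rw [← two_mul, gcd_mul_left, ← isCoprime_iff_gcd_eq_one, IsCoprime.mul_right_iff,
      isCoprime_two_right, isCoprime_iff_gcd_eq_one]
    simp [hs]
  · refine iff_of_false (fun h => hx ?_) (fun h => hx h.2)
    exact even_iff_two_dvd.2 (by exact_mod_cast h ▸ gcd_dvd_right (2 * s) x)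

lemma gcd_two_mul_sub_self_eq_one_iff (s w : ℤ) :
    gcd (2 * s) (w - s) = 1 ↔ Even s ∧ gcd (2 * s) w = 1 ∨ Odd s ∧ gcd (2 * s) w = 2 := by
  rcases even_or_odd s with hs | hs
  · simp [gcd_two_mul_eq_one_iff, hs, not_odd_iff_even.2 hs, Int.odd_sub]
  · simp [gcd_two_mul_eq_one_iff, gcd_two_mul_eq_two_iff hs, hs, not_even_iff_odd.2 hs,
      Int.odd_sub]

end Int

theorem stmt_2_general (g w : ℤ) (r l : ℤ)
    (gsp : ℤ) (hgsp : 2 * gsp = 2 + 2 * (g - 1) * r + r * l * (r - 1)) :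
    Int.gcd r (w + 1 - gsp) = 1 ↔
      (Even l ∧ Int.gcd r w = 1) ∨
      (Odd l ∧ Int.gcd r w = 1 ∧ ¬ (r % 4 = 2)) ∨
      (Odd l ∧ Int.gcd r w = 2 ∧ Odd (r / 2)) := by
  rcases Int.even_or_odd l with hl | hl
  · obtain ⟨m, rfl⟩ := hl
    have hshift : w + 1 - gsp = w + (1 - g - m * (r - 1)) * r := by linarith
    rw [hshift, Int.gcd_add_mul_right_right]
    simp
  obtain ⟨m, rfl⟩ := id hl
  simp only [hl, Int.not_even_iff_odd.2 hl, true_and, false_and, false_or]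
  rcases Int.even_or_odd' r with ⟨s, rfl | rfl⟩
  · have hshift : w + 1 - gsp = w - s + (2 - g + m - s - 2 * m * s) * (2 * s) := by linarith
    have hmod : 2 * s % 4 = 2 ↔ Odd s := by
      rw [Int.odd_iff]; omega
    rw [hshift, Int.gcd_add_mul_right_right, Int.gcd_two_mul_sub_self_eq_one_iff, hmod,
      Int.mul_ediv_cancel_left s two_ne_zero, ← Int.not_odd_iff_even]
    tauto
  · have hshift : w + 1 - gsp = w + (1 - g - (2 * m + 1) * s) * (2 * s + 1) := by linarith
    have hmod : (2 * s + 1) % 4 ≠ 2 := by omega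
    have hgcd : Int.gcd (2 * s + 1) w ≠ 2 := fun h => by
      have := h ▸ Int.gcd_dvd_left (2 * s + 1) w
      omega
    rw [hshift, Int.gcd_add_mul_right_right]
    simp [hmod, hgcd]

/-- Characterization of the BPS condition `gcd(r, w + 1 - gˢᵖ) = 1` for the
pair `(r, w)` in terms of the parities of `l` and `r` and of `gcd(r, w)`. -/
theorem stmt_2 (g w : ℤ) (r l : ℤ) (hrpos : 0 < r) (hlpos : 0 < l)
    (gsp : ℤ) (hgsp : 2 * gsp = 2 + 2 * (g - 1) * r + r * l * (r - 1)) :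
    Int.gcd r (w + 1 - gsp) = 1 ↔
      (Even l ∧ Int.gcd r w = 1) ∨
      (Odd l ∧ Int.gcd r w = 1 ∧ ¬ (r % 4 = 2)) ∨
      (Odd l ∧ Int.gcd r w = 2 ∧ Odd (r / 2)) :=
  stmt_2_general g w r l gsp hgsp
end
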